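/- Let a compact Lie group G act freely on a smooth manifold N with quotient submersion q : N → N/G, fundamental vector fields v_a, and structure constants f_{ab}^c. Let λ be a G-invariant volume form on N such that div_λ(v_a) + f_{ab}^b = 0 for all a. Then there exists a unique volume form λ_red on N/G such that ι_{v_1 ∧ ⋯ ∧ v_k} λ = q^* λ_red (up to the normalization constant c coming from the ghost berezinian), where k = dim G. -/
import Mathlib


/- STATEMENT 8: Let a compact Lie group G (dim G = k) act freely on N with
quotient submersion q : N → N/G, fundamental vector fields v_a and structure
constants f_{ab}^c.  If λ is a G-invariant volume form with
div_λ(v_a) + f_{ab}^b = 0, then there is a unique volume form λ_red on N/G with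
ι_{v_1∧⋯∧v_k} λ = q^* λ_red.
Abstract model: ΩN and ΩQ are the (real vector spaces of) forms on N and N/G,
`qpull` is the injective pullback q^*, whose range is exactly the basic forms;
`ιv a` and `Lv a` are contraction and Lie derivative along v_a, subject to the
usual Cartan-calculus relations. -/
theorem stmt8 {ΩN ΩQ : Type*}
    [AddCommGroup ΩN] [Module ℝ ΩN] [AddCommGroup ΩQ] [Module ℝ ΩQ]
    {k : ℕ}
    (f : Fin k → Fin k → Fin k → ℝ)       -- structure constants of Lie G
    (ιv Lv : Fin k → ΩN →ₗ[ℝ] ΩN)          -- ι_{v_a}, L_{v_a}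
    (qpull : ΩQ →ₗ[ℝ] ΩN)                  -- q^*
    (hq : Function.Injective qpull)
    -- basic forms are exactly the pullbacks from the quotient
    (hbasic : ∀ α : ΩN,
      ((∀ a, ιv a α = 0) ∧ (∀ a, Lv a α = 0)) ↔ α ∈ Set.range qpull)
    -- Cartan calculus relations
    (hanti : ∀ a b α, ιv a (ιv b α) = - ιv b (ιv a α))
    (hcommL : ∀ a b α, Lv a (ιv b α) - ιv b (Lv a α) = ∑ c, f a b c • ιv c α)
    (hLL : ∀ a b α, Lv a (Lv b α) - Lv b (Lv a α) = ∑ c, f a b c • Lv c α)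
    -- the volume form λ on N
    (lam : ΩN)
    -- λ is G-invariant
    (hinv : ∀ a, Lv a lam = 0)
    -- div_λ(v_a) + f_{ab}^b = 0  (i.e. Δ_λ(μ_a) + f_{ab}^b = 0)
    (div : Fin k → ℝ)
    (hdivdef : ∀ a, Lv a lam = div a • lam)
    (hdiv : ∀ a, div a + ∑ b, f a b b = 0) :
    -- there is a unique λ_red on N/G with ι_{v_1 ∧ ⋯ ∧ v_k} λ = q^* λ_red
    ∃! lamred : ΩQ,
      qpull lamred = (List.finRange k).foldl (fun α a => ιv a α) lam := by
  classical
  -- iterated contraction as a linear map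
  set F : List (Fin k) → ΩN →ₗ[ℝ] ΩN :=
    fun l => l.foldl (fun g a => (ιv a).comp g) LinearMap.id with hFdef
  have hFaux : ∀ (l : List (Fin k)) (g : ΩN →ₗ[ℝ] ΩN) (α : ΩN),
      (l.foldl (fun g a => (ιv a).comp g) g) α = l.foldl (fun α a => ιv a α) (g α) := by
    intro l
    induction l with
    | nil => intro g α; rfl
    | cons b t ih => intro g α; simpa using ih ((ιv b).comp g) α
  have hF : ∀ (l : List (Fin k)) (α : ΩN),
      F l α = l.foldl (fun α a => ιv a α) α := by
    intro l α; simpa using hFaux l LinearMap.id α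
  have hFcons : ∀ (b : Fin k) (t : List (Fin k)) (α : ΩN),
      F (b :: t) α = F t (ιv b α) := by
    intro b t α
    rw [hF, hF]; rfl
  -- ι_a ι_a = 0
  have hself : ∀ a (α : ΩN), ιv a (ιv a α) = 0 := by
    intro a α
    have h := hanti a a α
    have h2 : (2 : ℝ) • ιv a (ιv a α) = 0 := by
      rw [two_smul]
      nth_rewrite 1 [h]
      abel
    have := smul_eq_zero.mp h2
    rcases this with h' | h'
    · norm_num at h'
    · exact h'
  -- ι_a commutes with F up to sign
  have hcomm : ∀ (l : List (Fin k)) a (α : ΩN),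
      ιv a (F l α) = ((-1 : ℝ) ^ l.length) • F l (ιv a α) := by
    intro l
    induction l with
    | nil => intro a α; simp [hF]
    | cons b t ih =>
      intro a α
      rw [hFcons, hFcons, ih a (ιv b α), hanti a b α]
      rw [map_neg, smul_neg]
      rw [List.length_cons, pow_succ]
      rw [mul_smul]
      congr 1
      simp
  -- if a occurs in l, then ι_a (F l α) = 0
  have hmem : ∀ (l : List (Fin k)) a (α : ΩN), a ∈ l → ιv a (F l α) = 0 := by
    intro l
    induction l with
    | nil => intro a α h; simp at h
    | cons b t ih =>
      intro a α h
      rw [hFcons]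
      rcases List.mem_cons.mp h with h' | h'
      · subst h'
        rw [hcomm t a (ιv a α), hself, map_zero, smul_zero]
      · exact ih a (ιv b α) h'
  -- consequently F l (ι_a α) = 0 for a ∈ l
  have hmem2 : ∀ (l : List (Fin k)) a (α : ΩN), a ∈ l → F l (ιv a α) = 0 := by
    intro l a α h
    have h1 := hcomm l a α
    have h2 : ((-1 : ℝ) ^ l.length) • ιv a (F l α)
        = (((-1 : ℝ) ^ l.length) * ((-1 : ℝ) ^ l.length)) • F l (ιv a α) := by
      rw [h1, smul_smul]
    rw [hmem l a α h, smul_zero] at h2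
    have : (((-1 : ℝ) ^ l.length) * ((-1 : ℝ) ^ l.length)) = 1 := by
      rw [← pow_add]
      exact Even.neg_one_pow ⟨l.length, rfl⟩
    rw [this, one_smul] at h2
    exact h2.symm
  -- Lie derivative through the iterated contraction
  have hLie : ∀ a (l : List (Fin k)) (α : ΩN),
      (∀ c, c ∉ l → ιv c α = 0) →
      Lv a (F l α) = F l (Lv a α) + (l.map (fun b => f a b b)).sum • F l α := by
    intro a l
    induction l with
    | nil => intro α _; simp [hF]
    | cons b t ih =>
      intro α hα
      rw [hFcons]
      have hα' : ∀ c, c ∉ t → ιv c (ιv b α) = 0 := by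
        intro c hc
        by_cases hcb : c = b
        · subst hcb; exact hself c α
        · have : c ∉ b :: t := by
            simp [List.mem_cons, hcb, hc]
          rw [hanti c b α, hα c this, map_zero, neg_zero]
      rw [ih (ιv b α) hα']
      have hLb : Lv a (ιv b α) = ιv b (Lv a α) + ∑ c, f a b c • ιv c α := by
        have := hcommL a b α
        linear_combination (norm := module) this
      rw [hLb, map_add, map_sum]
      have hsum : ∑ c, F t (f a b c • ιv c α) = f a b b • F t (ιv b α) := by
        rw [Finset.sum_eq_single b]
        · rw [map_smul]
        · intro c _ hcb
          rw [map_smul]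
          by_cases hct : c ∈ t
          · rw [hmem2 t c α hct, smul_zero]
          · have : c ∉ b :: t := by simp [List.mem_cons, hcb, hct]
            rw [hα c this, map_zero, smul_zero]
        · intro h; exact absurd (Finset.mem_univ b) h
      rw [hsum]
      rw [← hFcons b t (Lv a α)]
      rw [List.map_cons, List.sum_cons, add_smul]
      abel
  -- the iterated contraction of λ
  set μ : ΩN := F (List.finRange k) lam with hμdef
  have hι : ∀ a, ιv a μ = 0 := fun a =>
    hmem (List.finRange k) a lam (List.mem_finRange a)
  have hdivlam : ∀ a, div a • lam = 0 := by
    intro a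
    rw [← hdivdef a, hinv a]
  have hL : ∀ a, Lv a μ = 0 := by
    intro a
    have h := hLie a (List.finRange k) lam (by
      intro c hc; exact absurd (List.mem_finRange c) hc)
    rw [hinv a, map_zero, zero_add] at h
    have hsum : ((List.finRange k).map (fun b => f a b b)).sum = ∑ b, f a b b := by
      exact (Fin.sum_univ_def _).symm
    have hval : ((List.finRange k).map (fun b => f a b b)).sum = - div a := by
      rw [hsum]; linarith [hdiv a]
    rw [hval] at h
    have : div a • μ = 0 := by
      rw [hμdef, ← map_smul, hdivlam a, map_zero]
    rw [h, neg_smul, this, neg_zero]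
  have hbasicμ : μ ∈ Set.range qpull := (hbasic μ).mp ⟨hι, hL⟩
  obtain ⟨β, hβ⟩ := hbasicμ
  refine ⟨β, hβ.trans (hF (List.finRange k) lam), ?_⟩
  intro y hy
  exact hq (hy.trans ((hF (List.finRange k) lam).symm.trans hβ.symm))
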